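/- Let F be a homogeneous sextic form in 4 complex variables whose surface S = Z(F) ⊂ P^3 has only finitely many singular points, all of them simple double points, and let L ⊂ S be a line such that the gradient ∇F, evaluated at representatives of the points of L, takes values in one fixed 1-dimensional linear subspace of ℂ^4 (equivalently, the tangent hyperplanes to S at all smooth points of S on L coincide). Then L contains exactly 5 distinct singular points of S. -/

import Mathlib

open MvPolynomial

/-- A point of `ℙ³(ℂ)` (projectivization of `ℂ⁴`). -/
abbrev ProjP3 := Projectivization ℂ (Fin 4 → ℂ)

/-- `p` is a singular point of the surface `Z(F) ⊂ ℙ³`: all four partial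
derivatives of `F` vanish at a representative of `p`. -/
def IsSingularPt (F : MvPolynomial (Fin 4) ℂ) (p : ProjP3) : Prop :=
  ∀ i : Fin 4, eval p.rep (pderiv i F) = 0

/-- `p` is a simple double point (node) of `Z(F)`: the 4×4 Hessian matrix of
second partial derivatives of `F` at a representative of `p` has rank 3. -/
def IsNodePt (F : MvPolynomial (Fin 4) ℂ) (p : ProjP3) : Prop :=
  (Matrix.of fun (i j : Fin 4) => eval p.rep (pderiv i (pderiv j F))).rank = 3


namespace Stmt8Aux

/-- Line substitution: `x_i ↦ a_i + X b_i`. -/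
noncomputable def lineP (a b : Fin 4 → ℂ) (q : MvPolynomial (Fin 4) ℂ) : Polynomial ℂ :=
  MvPolynomial.aeval (fun i => Polynomial.C (a i) + Polynomial.X * Polynomial.C (b i)) q

lemma degree_support_of_homog {q : MvPolynomial (Fin 4) ℂ} {n : ℕ} (h : q.IsHomogeneous n)
    {d : Fin 4 →₀ ℕ} (hd : coeff d q ≠ 0) : Finsupp.degree d = n := by
  rw [Finsupp.degree_eq_weight_one]
  exact h hd

lemma sum_univ_of_homog {q : MvPolynomial (Fin 4) ℂ} {n : ℕ} (h : q.IsHomogeneous n)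
    {d : Fin 4 →₀ ℕ} (hd : coeff d q ≠ 0) : ∑ i, d i = n := by
  rw [← degree_support_of_homog h hd, Finsupp.degree]
  exact (Finset.sum_subset (Finset.subset_univ _)
    (fun x _ hx => by simpa using Finsupp.notMem_support_iff.mp hx)).symm

lemma pderiv_homog {q : MvPolynomial (Fin 4) ℂ} {n : ℕ} (h : q.IsHomogeneous (n + 1))
    (i : Fin 4) : (pderiv i q).IsHomogeneous n := by
  classical
  have hrw : pderiv i q
      = ∑ d ∈ q.support, monomial (d - Finsupp.single i 1) (coeff d q * d i) := by
    conv_lhs => rw [q.as_sum]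
    rw [map_sum]
    exact Finset.sum_congr rfl fun d _ => pderiv_monomial
  rw [hrw]
  apply IsHomogeneous.sum
  intro d hd
  by_cases h0 : d i = 0
  · rw [h0]
    norm_num
    exact isHomogeneous_zero _ _ _
  · apply isHomogeneous_monomial
    have hdeg : Finsupp.degree d = n + 1 :=
      degree_support_of_homog h (mem_support_iff.mp hd)
    have hkey : (d - Finsupp.single i 1) + Finsupp.single i 1 = d := by
      ext j
      rcases eq_or_ne j i with rfl | hj
      · simp only [Finsupp.coe_add, Pi.add_apply, Finsupp.coe_tsub, Pi.sub_apply,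
          Finsupp.single_eq_same]
        omega
      · simp [Finsupp.single_apply, (Ne.symm hj)]
    have hadd : Finsupp.degree ((d - Finsupp.single i 1) + Finsupp.single i 1)
        = Finsupp.degree (d - Finsupp.single i 1) + Finsupp.degree (Finsupp.single i 1) := by
      simp [Finsupp.degree_eq_weight_one, map_add]
    have hsingle : Finsupp.degree (Finsupp.single i (1 : ℕ)) = 1 := by
      simp [Finsupp.degree_apply, Finsupp.support_single_ne_zero i one_ne_zero]
    rw [hkey] at hadd
    rw [hsingle] at hadd
    omega

lemma homog_eval_smul {q : MvPolynomial (Fin 4) ℂ} {n : ℕ} (h : q.IsHomogeneous n)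
    (a : ℂ) (z : Fin 4 → ℂ) : eval (a • z) q = a ^ n * eval z q := by
  rw [eval_eq', eval_eq', Finset.mul_sum]
  refine Finset.sum_congr rfl fun d hd => ?_
  have hdeg := sum_univ_of_homog h (mem_support_iff.mp hd)
  calc coeff d q * ∏ i, (a • z) i ^ d i
      = coeff d q * ∏ i, (a ^ d i * z i ^ d i) := by
        simp [mul_pow]
    _ = coeff d q * ((∏ i, a ^ d i) * ∏ i, z i ^ d i) := by rw [Finset.prod_mul_distrib]
    _ = a ^ n * (coeff d q * ∏ i, z i ^ d i) := by
        rw [Finset.prod_pow_eq_pow_sum, hdeg]; ring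

lemma lineP_eval (a b : Fin 4 → ℂ) (q : MvPolynomial (Fin 4) ℂ) (x : ℂ) :
    (lineP a b q).eval x = eval (a + x • b) q := by
  induction q using MvPolynomial.induction_on with
  | C c => simp [lineP]
  | add p r hp hr => simp only [lineP, map_add, Polynomial.eval_add] at *; rw [hp, hr]
  | mul_X p j hp =>
      simp only [lineP, map_mul, aeval_X, Polynomial.eval_mul] at *
      rw [hp]
      simp only [Polynomial.eval_add, Polynomial.eval_mul, Polynomial.eval_C, Polynomial.eval_X,
        eval_mul, eval_X, Pi.add_apply, Pi.smul_apply, smul_eq_mul]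

lemma derivative_lineP (a b : Fin 4 → ℂ) (q : MvPolynomial (Fin 4) ℂ) :
    Polynomial.derivative (lineP a b q) = ∑ i, Polynomial.C (b i) * lineP a b (pderiv i q) := by
  classical
  induction q using MvPolynomial.induction_on with
  | C c => simp [lineP]
  | add p r hp hr =>
      simp only [lineP, map_add] at *
      rw [hp, hr, ← Finset.sum_add_distrib]
      exact Finset.sum_congr rfl fun i _ => by rw [mul_add]
  | mul_X p j hp =>
      simp only [lineP, map_mul, aeval_X] at *
      rw [Polynomial.derivative_mul, hp]
      have hderiv : Polynomial.derivative
          (Polynomial.C (a j) + Polynomial.X * Polynomial.C (b j)) = Polynomial.C (b j) := by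
        simp
      rw [hderiv, Finset.sum_mul]
      have hsplit : ∀ i : Fin 4,
          (MvPolynomial.aeval fun i => Polynomial.C (a i) + Polynomial.X * Polynomial.C (b i))
              (pderiv i (p * X j))
            = (MvPolynomial.aeval fun i => Polynomial.C (a i) + Polynomial.X * Polynomial.C (b i))
                (pderiv i p) * (Polynomial.C (a j) + Polynomial.X * Polynomial.C (b j))
              + (if j = i then (MvPolynomial.aeval fun i =>
                  Polynomial.C (a i) + Polynomial.X * Polynomial.C (b i)) p else 0) := by
        intro i
        rw [pderiv_mul, map_add, map_mul, map_mul, aeval_X]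
        congr 1
        rcases eq_or_ne j i with rfl | hj
        · simp
        · simp [pderiv_X_of_ne hj, hj]
      simp only [hsplit, mul_add, mul_ite, mul_zero, Finset.sum_add_distrib,
        Finset.sum_ite_eq, Finset.mem_univ, if_true]
      rw [mul_comm ((MvPolynomial.aeval fun i =>
        Polynomial.C (a i) + Polynomial.X * Polynomial.C (b i)) p) (Polynomial.C (b j))]
      simp only [mul_assoc]

lemma derivative_lineP_eval (a b : Fin 4 → ℂ) (q : MvPolynomial (Fin 4) ℂ) (x : ℂ) :
    (Polynomial.derivative (lineP a b q)).eval x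
      = ∑ i, b i * eval (a + x • b) (pderiv i q) := by
  rw [derivative_lineP]
  rw [Polynomial.eval_finset_sum]
  exact Finset.sum_congr rfl fun i _ => by
    rw [Polynomial.eval_mul, Polynomial.eval_C, lineP_eval]

lemma coeff_prod_of_le {ι : Type*} (s : Finset ι) (q : ι → Polynomial ℂ) (k : ι → ℕ)
    (h : ∀ i ∈ s, (q i).natDegree ≤ k i) :
    (∏ i ∈ s, q i).coeff (∑ i ∈ s, k i) = ∏ i ∈ s, (q i).coeff (k i) := by
  classical
  induction s using Finset.cons_induction with
  | empty => simp
  | cons a s ha ih =>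
      rw [Finset.prod_cons, Finset.sum_cons,
        Polynomial.coeff_mul_add_eq_of_natDegree_le (h a (Finset.mem_cons_self a s))
          (le_trans (Polynomial.natDegree_prod_le _ _)
            (Finset.sum_le_sum fun i hi => h i (Finset.mem_cons_of_mem hi))),
        ih fun i hi => h i (Finset.mem_cons_of_mem hi), Finset.prod_cons]

lemma natDegree_linfactor_le (a b : Fin 4 → ℂ) (i : Fin 4) :
    (Polynomial.C (a i) + Polynomial.X * Polynomial.C (b i)).natDegree ≤ 1 := by
  refine le_trans (Polynomial.natDegree_add_le _ _) ?_
  simp only [Polynomial.natDegree_C, max_le_iff]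
  exact ⟨Nat.zero_le 1, le_trans Polynomial.natDegree_mul_le (by simp)⟩

lemma coeff_one_linfactor (a b : Fin 4 → ℂ) (i : Fin 4) :
    (Polynomial.C (a i) + Polynomial.X * Polynomial.C (b i)).coeff 1 = b i := by
  rw [Polynomial.coeff_add, Polynomial.coeff_C]
  simp [Polynomial.coeff_X_mul]

lemma lineP_natDegree_le {q : MvPolynomial (Fin 4) ℂ} {n : ℕ} (hq : q.IsHomogeneous n)
    (a b : Fin 4 → ℂ) : (lineP a b q).natDegree ≤ n := by
  classical
  rw [lineP]
  conv_lhs => rw [q.as_sum, map_sum]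
  apply Polynomial.natDegree_sum_le_of_forall_le
  intro d hd
  rw [aeval_monomial]
  refine le_trans Polynomial.natDegree_mul_le ?_
  have h1 : (algebraMap ℂ (Polynomial ℂ) (coeff d q)).natDegree = 0 := by
    rw [Polynomial.algebraMap_eq]
    exact Polynomial.natDegree_C _
  have h2 : (Finsupp.prod d fun i k =>
      (Polynomial.C (a i) + Polynomial.X * Polynomial.C (b i)) ^ k).natDegree ≤ n := by
    rw [Finsupp.prod]
    refine le_trans (Polynomial.natDegree_prod_le _ _) ?_
    have hbound : ∀ i ∈ d.support,
        ((Polynomial.C (a i) + Polynomial.X * Polynomial.C (b i)) ^ d i).natDegree ≤ d i :=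
      fun i _ => le_trans Polynomial.natDegree_pow_le
        (le_trans (Nat.mul_le_mul_left (d i) (natDegree_linfactor_le a b i))
          (le_of_eq (mul_one _)))
    refine le_trans (Finset.sum_le_sum hbound) ?_
    rw [show ∑ i ∈ d.support, d i = Finsupp.degree d from rfl,
      degree_support_of_homog hq (mem_support_iff.mp hd)]
  omega

lemma lineP_coeff_top {q : MvPolynomial (Fin 4) ℂ} {n : ℕ} (hq : q.IsHomogeneous n)
    (a b : Fin 4 → ℂ) : (lineP a b q).coeff n = eval b q := by
  classical
  rw [lineP]
  conv_lhs => rw [q.as_sum, map_sum]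
  rw [Polynomial.finset_sum_coeff, eval_eq']
  refine Finset.sum_congr rfl fun d hd => ?_
  rw [aeval_monomial, Polynomial.algebraMap_eq]
  have hprod : (Finsupp.prod d fun i k =>
      (Polynomial.C (a i) + Polynomial.X * Polynomial.C (b i)) ^ k)
      = ∏ i, (Polynomial.C (a i) + Polynomial.X * Polynomial.C (b i)) ^ d i :=
    Finset.prod_subset (Finset.subset_univ _) (fun i _ hi => by
      simp [Finsupp.notMem_support_iff.mp hi])
  rw [hprod, Polynomial.coeff_C_mul]
  congr 1
  have hdeg := sum_univ_of_homog hq (mem_support_iff.mp hd)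
  have hle : ∀ i ∈ Finset.univ, ((Polynomial.C (a i) + Polynomial.X * Polynomial.C (b i)) ^ d i).natDegree ≤ d i :=
    fun i _ => le_trans Polynomial.natDegree_pow_le
      (le_trans (Nat.mul_le_mul_left (d i) (natDegree_linfactor_le a b i))
        (le_of_eq (mul_one _)))
  rw [← hdeg, coeff_prod_of_le Finset.univ _ _ hle]
  refine Finset.prod_congr rfl fun i _ => ?_
  have hc := Polynomial.coeff_pow_of_natDegree_le (m := d i) (natDegree_linfactor_le a b i)
  rw [mul_one] at hc
  rw [hc, coeff_one_linfactor]

lemma rank_le_two_of_two_rows {H : Matrix (Fin 4) (Fin 4) ℂ} {z u : Fin 4 → ℂ}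
    (hindep : LinearIndependent ℂ ![z, u])
    (hz : ∀ j, ∑ i, z i * H i j = 0) (hu : ∀ j, ∑ i, u i * H i j = 0) :
    H.rank ≤ 2 := by
  rw [← Matrix.rank_transpose]
  have hvec : ∀ (y : Fin 4 → ℂ), (∀ j, ∑ i, y i * H i j = 0) → H.transpose.mulVecLin y = 0 := by
    intro y hy
    ext j
    simp only [Matrix.mulVecLin_apply, Matrix.mulVec, dotProduct,
      Matrix.transpose_apply, Pi.zero_apply]
    rw [← hy j]
    exact Finset.sum_congr rfl fun i _ => mul_comm _ _
  have hker : Submodule.span ℂ (Set.range ![z, u]) ≤ LinearMap.ker H.transpose.mulVecLin := by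
    rw [Submodule.span_le]
    rintro x ⟨i, rfl⟩
    simp only [SetLike.mem_coe, LinearMap.mem_ker]
    fin_cases i
    · exact hvec z hz
    · exact hvec u hu
  have h1 : 2 ≤ Module.finrank ℂ (LinearMap.ker H.transpose.mulVecLin) := by
    have hmono := Submodule.finrank_mono hker
    rwa [finrank_span_eq_card hindep, Fintype.card_fin] at hmono
  have h2 := LinearMap.finrank_range_add_finrank_ker H.transpose.mulVecLin
  rw [Module.finrank_fin_fun] at h2
  show Module.finrank ℂ (LinearMap.range H.transpose.mulVecLin) ≤ 2
  omega

lemma pair_rel {v u : Fin 4 → ℂ} (hu0 : u ≠ 0) (hv : v ∉ Submodule.span ℂ {u}) :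
    ∀ s t : ℂ, s • v + t • u = 0 → s = 0 ∧ t = 0 := by
  intro s t hst
  by_cases hs : s = 0
  · refine ⟨hs, ?_⟩
    rw [hs, zero_smul, zero_add] at hst
    exact (smul_eq_zero.mp hst).resolve_right hu0
  · exfalso
    apply hv
    rw [Submodule.mem_span_singleton]
    refine ⟨-(s⁻¹ * t), ?_⟩
    have h2 : s • v = -(t • u) := eq_neg_of_add_eq_zero_left hst
    calc -(s⁻¹ * t) • u = s⁻¹ • (-(t • u)) := by
          rw [smul_neg, smul_smul, neg_smul]
      _ = s⁻¹ • (s • v) := by rw [h2]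
      _ = v := by rw [smul_smul, inv_mul_cancel₀ hs, one_smul]

lemma line_nonzero {v u : Fin 4 → ℂ}
    (hpair : ∀ s t : ℂ, s • v + t • u = 0 → s = 0 ∧ t = 0) :
    ∀ x : ℂ, v + x • u ≠ 0 := by
  intro x h
  have h0 := hpair 1 x (by rw [one_smul]; exact h)
  exact one_ne_zero h0.1

lemma mk_line_inj {v u : Fin 4 → ℂ}
    (hpair : ∀ s t : ℂ, s • v + t • u = 0 → s = 0 ∧ t = 0)
    (hnz : ∀ x : ℂ, v + x • u ≠ 0) {x y : ℂ}
    (h : Projectivization.mk ℂ (v + x • u) (hnz x) = Projectivization.mk ℂ (v + y • u) (hnz y)) :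
    x = y := by
  rw [Projectivization.mk_eq_mk_iff'] at h
  obtain ⟨a, ha⟩ := h
  have ha' : a • v + (a * y) • u = v + x • u := by
    rw [← smul_smul, ← smul_add]
    exact ha
  have hkey : (a - 1) • v + (a * y - x) • u = 0 := by
    calc (a - 1) • v + (a * y - x) • u
        = (a • v + (a * y) • u) - (v + x • u) := by
          rw [sub_smul, sub_smul, one_smul]; abel
      _ = 0 := by rw [ha', sub_self]
  obtain ⟨h1, h2⟩ := hpair _ _ hkey
  have ha1 : a = 1 := sub_eq_zero.mp h1
  rw [ha1, one_mul] at h2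
  exact (sub_eq_zero.mp h2).symm

end Stmt8Aux


open Stmt8Aux in
/-- Let `S = Z(F) ⊂ ℙ³` be a sextic surface with only finitely many
singular points, all of them simple double points, and let `L ⊂ S` be a line
(projectivization of the 2-dimensional subspace `W`) such that the gradient `∇F`,
evaluated on `W`, takes values in one fixed 1-dimensional subspace `ℂ·w` of `ℂ⁴`
(equivalently, the tangent hyperplanes to `S` at all smooth points of `S` on `L`
coincide). Then `L` contains exactly 5 distinct singular points of `S`. -/
theorem stmt8 (F : MvPolynomial (Fin 4) ℂ) (hF : F.IsHomogeneous 6)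
    (hfin : {p : ProjP3 | IsSingularPt F p}.Finite)
    (hnode : ∀ p : ProjP3, IsSingularPt F p → IsNodePt F p)
    (W : Submodule ℂ (Fin 4 → ℂ)) (hW : Module.finrank ℂ W = 2)
    (hLS : ∀ v ∈ W, eval v F = 0)
    (htang : ∃ w : Fin 4 → ℂ, w ≠ 0 ∧
      ∀ v ∈ W, ∃ c : ℂ, (fun j : Fin 4 => eval v (pderiv j F)) = c • w) :
    {p : ProjP3 | p.rep ∈ W ∧ IsSingularPt F p}.ncard = 5 := by
  classical
  obtain ⟨w, hw0, hwall⟩ := htang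
  obtain ⟨j₀, hj₀⟩ : ∃ j : Fin 4, w j ≠ 0 := by
    by_contra hc
    push_neg at hc
    exact hw0 (funext fun j => hc j)
  have hhom5 : ∀ j, (pderiv j F).IsHomogeneous 5 := fun j =>
    pderiv_homog (show F.IsHomogeneous (5 + 1) from hF) j
  have hhom4 : ∀ i j, (pderiv i (pderiv j F)).IsHomogeneous 4 := fun i j =>
    pderiv_homog (show (pderiv j F).IsHomogeneous (4 + 1) from hhom5 j) i
  -- singularity criterion on W
  have hsing_of : ∀ z ∈ W, eval z (pderiv j₀ F) = 0 → ∀ j, eval z (pderiv j F) = 0 := by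
    intro z hz hzg j
    obtain ⟨c, hc⟩ := hwall z hz
    have h0 : eval z (pderiv j₀ F) = c * w j₀ := by
      have h := congrFun hc j₀
      simpa using h
    have hc0 : c = 0 := by
      rw [hzg] at h0
      rcases mul_eq_zero.mp h0.symm with h | h
      · exact h
      · exact absurd h hj₀
    have hj' := congrFun hc j
    simp only [Pi.smul_apply, smul_eq_mul] at hj'
    rw [hj', hc0, zero_mul]
  -- rep of mk
  have hrepW : ∀ (z : Fin 4 → ℂ) (hz : z ≠ 0), ∃ a : ℂ, a ≠ 0 ∧
      (Projectivization.mk ℂ z hz).rep = a • z := by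
    intro z hz
    obtain ⟨a, ha⟩ := Projectivization.exists_smul_eq_mk_rep ℂ z hz
    exact ⟨(a : ℂ), a.ne_zero, by rw [← ha, Units.smul_def]⟩
  have hsing_mk : ∀ (z : Fin 4 → ℂ) (hz : z ≠ 0), z ∈ W → eval z (pderiv j₀ F) = 0 →
      (Projectivization.mk ℂ z hz).rep ∈ W ∧ IsSingularPt F (Projectivization.mk ℂ z hz) := by
    intro z hz hzW hzg
    obtain ⟨a, ha0, ha⟩ := hrepW z hz
    constructor
    · rw [ha]; exact Submodule.smul_mem W a hzW
    · intro j
      rw [ha, homog_eval_smul (hhom5 j), hsing_of z hzW hzg j, mul_zero]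
  -- existence of u ∈ W with eval u (pderiv j₀ F) ≠ 0
  have hexists : ∃ z ∈ W, eval z (pderiv j₀ F) ≠ 0 := by
    by_contra hall
    push_neg at hall
    have hWbot : W ≠ ⊥ := by
      intro h
      rw [h, finrank_bot] at hW
      omega
    obtain ⟨e₁, he₁W, he₁0⟩ := Submodule.exists_mem_ne_zero_of_ne_bot hWbot
    have hnle : ¬ W ≤ Submodule.span ℂ {e₁} := by
      intro hle
      have h := Submodule.finrank_mono hle
      rw [hW, finrank_span_singleton he₁0] at h
      omega
    obtain ⟨e₂, he₂W, he₂⟩ := SetLike.not_le_iff_exists.mp hnle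
    have hpaire := pair_rel he₁0 he₂
    have hnze := line_nonzero hpaire
    have hinj : Function.Injective fun x : ℂ =>
        Projectivization.mk ℂ (e₂ + x • e₁) (hnze x) :=
      fun x y hxy => mk_line_inj hpaire hnze hxy
    have hmem : ∀ x : ℂ, (Projectivization.mk ℂ (e₂ + x • e₁) (hnze x)) ∈
        {p : ProjP3 | IsSingularPt F p} := by
      intro x
      have hWm : e₂ + x • e₁ ∈ W := Submodule.add_mem W he₂W (Submodule.smul_mem W x he₁W)
      exact (hsing_mk _ (hnze x) hWm (hall _ hWm)).2
    exact hfin.not_infinite (Set.infinite_of_injective_forall_mem hinj hmem)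
  obtain ⟨u, huW, hu⟩ := hexists
  have hu0 : u ≠ 0 := by
    intro h
    apply hu
    rw [h]
    have h0 := homog_eval_smul (hhom5 j₀) 0 0
    simpa using h0
  have hnleu : ¬ W ≤ Submodule.span ℂ {u} := by
    intro hle
    have h := Submodule.finrank_mono hle
    rw [hW, finrank_span_singleton hu0] at h
    omega
  obtain ⟨v, hvW, hv⟩ := SetLike.not_le_iff_exists.mp hnleu
  have hpair := pair_rel hu0 hv
  have hnz := line_nonzero hpair
  have hindep : LinearIndependent ℂ ![v, u] := by
    rw [linearIndependent_fin2]
    refine ⟨by simpa using hu0, ?_⟩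
    intro a ha
    simp only [Matrix.cons_val_one, Matrix.head_cons, Matrix.cons_val_zero] at ha
    have h0 : (1 : ℂ) • v + (-a) • u = 0 := by
      rw [one_smul, neg_smul, ← ha]
      simp
    exact one_ne_zero (hpair _ _ h0).1
  have hWspan : ∀ z ∈ W, ∃ s t : ℂ, z = s • v + t • u := by
    have hle : Submodule.span ℂ (Set.range ![v, u]) ≤ W := by
      rw [Submodule.span_le]
      rintro x ⟨i, rfl⟩
      fin_cases i
      · simpa using hvW
      · simpa using huW
    have heq : Submodule.span ℂ (Set.range ![v, u]) = W := by
      apply Submodule.eq_of_le_of_finrank_le hle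
      rw [hW, finrank_span_eq_card hindep, Fintype.card_fin]
    intro z hz
    rw [← heq] at hz
    obtain ⟨cf, hcf⟩ := (Submodule.mem_span_range_iff_exists_fun ℂ).mp hz
    refine ⟨cf 0, cf 1, ?_⟩
    rw [← hcf, Fin.sum_univ_two]
    simp
  have hg₁eval : ∀ x : ℂ, (lineP v u (pderiv j₀ F)).eval x
      = eval (v + x • u) (pderiv j₀ F) := fun x => lineP_eval v u (pderiv j₀ F) x
  have hcoeff : (lineP v u (pderiv j₀ F)).coeff 5 = eval u (pderiv j₀ F) :=
    lineP_coeff_top (hhom5 j₀) v u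
  have hg₁ne : lineP v u (pderiv j₀ F) ≠ 0 := by
    intro h
    apply hu
    rw [← hcoeff, h, Polynomial.coeff_zero]
  have hdeg5 : (lineP v u (pderiv j₀ F)).natDegree = 5 :=
    le_antisymm (lineP_natDegree_le (hhom5 j₀) v u)
      (Polynomial.le_natDegree_of_ne_zero (by rw [hcoeff]; exact hu))
  -- all roots are simple
  have hmult : ∀ x₀ : ℂ, (lineP v u (pderiv j₀ F)).rootMultiplicity x₀ ≤ 1 := by
    intro x₀
    by_contra hgt
    push_neg at hgt
    have hdvd : (Polynomial.X - Polynomial.C x₀) ^ 2 ∣ lineP v u (pderiv j₀ F) :=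
      dvd_trans (pow_dvd_pow _ hgt) (Polynomial.pow_rootMultiplicity_dvd _ x₀)
    obtain ⟨h₁, hh₁⟩ := hdvd
    have hroot : (lineP v u (pderiv j₀ F)).eval x₀ = 0 := by
      rw [hh₁]
      simp
    have hdroot : (Polynomial.derivative (lineP v u (pderiv j₀ F))).eval x₀ = 0 := by
      rw [hh₁, Polynomial.derivative_mul, Polynomial.derivative_pow]
      simp
    have hzW : v + x₀ • u ∈ W := Submodule.add_mem W hvW (Submodule.smul_mem W x₀ huW)
    have hz0 : v + x₀ • u ≠ 0 := hnz x₀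
    have hzg : eval (v + x₀ • u) (pderiv j₀ F) = 0 := by
      rw [← hg₁eval x₀]
      exact hroot
    have hsingz := hsing_of _ hzW hzg
    have hsingp : IsSingularPt F (Projectivization.mk ℂ (v + x₀ • u) hz0) :=
      (hsing_mk _ hz0 hzW hzg).2
    obtain ⟨a, ha0, harep⟩ := hrepW _ hz0
    have hnodep : (Matrix.of fun i j =>
        eval (Projectivization.mk ℂ (v + x₀ • u) hz0).rep (pderiv i (pderiv j F))).rank = 3 :=
      hnode _ hsingp
    -- Euler-type relation
    have hA : ∀ j, ∑ i, (v + x₀ • u) i * eval (v + x₀ • u) (pderiv i (pderiv j F)) = 0 := by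
      intro j
      have hQ : lineP (v + x₀ • u) (v + x₀ • u) (pderiv j F) = 0 := by
        apply Polynomial.funext
        intro x
        rw [lineP_eval]
        have hzz : (v + x₀ • u) + x • (v + x₀ • u) = (1 + x) • (v + x₀ • u) := by
          rw [add_smul, one_smul]
        rw [hzz, homog_eval_smul (hhom5 j), hsingz j, mul_zero, Polynomial.eval_zero]
      have hD := derivative_lineP_eval (v + x₀ • u) (v + x₀ • u) (pderiv j F) 0
      rw [hQ] at hD
      simp only [Polynomial.derivative_zero, Polynomial.eval_zero, zero_smul, add_zero] at hD
      exact hD.symm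
    -- tangency relation
    have hB : ∀ j, ∑ i, u i * eval (v + x₀ • u) (pderiv i (pderiv j F)) = 0 := by
      intro j
      have hPj : Polynomial.C (w j₀) * lineP v u (pderiv j F)
          = Polynomial.C (w j) * lineP v u (pderiv j₀ F) := by
        apply Polynomial.funext
        intro x
        have hWm : v + x • u ∈ W := Submodule.add_mem W hvW (Submodule.smul_mem W x huW)
        obtain ⟨c, hc⟩ := hwall (v + x • u) hWm
        have h1 := congrFun hc j
        have h2 := congrFun hc j₀
        simp only [Pi.smul_apply, smul_eq_mul] at h1 h2
        rw [Polynomial.eval_mul, Polynomial.eval_mul, Polynomial.eval_C, Polynomial.eval_C,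
          lineP_eval, lineP_eval, h1, h2]
        ring
      have hD := congrArg Polynomial.derivative hPj
      rw [Polynomial.derivative_C_mul, Polynomial.derivative_C_mul] at hD
      have hE := congrArg (Polynomial.eval x₀) hD
      rw [Polynomial.eval_mul, Polynomial.eval_mul, Polynomial.eval_C, Polynomial.eval_C,
        hdroot, mul_zero, derivative_lineP_eval] at hE
      rcases mul_eq_zero.mp hE with h | h
      · exact absurd h hj₀
      · exact h
    -- assemble at the representative
    have hHz : ∀ jj, ∑ i, (v + x₀ • u) i * (Matrix.of fun i j =>
        eval (Projectivization.mk ℂ (v + x₀ • u) hz0).rep (pderiv i (pderiv j F))) i jj = 0 := by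
      intro jj
      have hsc : ∀ i, eval (Projectivization.mk ℂ (v + x₀ • u) hz0).rep (pderiv i (pderiv jj F))
          = a ^ 4 * eval (v + x₀ • u) (pderiv i (pderiv jj F)) := by
        intro i
        rw [harep]
        exact homog_eval_smul (hhom4 i jj) a _
      calc ∑ i, (v + x₀ • u) i * (Matrix.of fun i j =>
            eval (Projectivization.mk ℂ (v + x₀ • u) hz0).rep (pderiv i (pderiv j F))) i jj
          = ∑ i, a ^ 4 * ((v + x₀ • u) i * eval (v + x₀ • u) (pderiv i (pderiv jj F))) := by
            refine Finset.sum_congr rfl fun i _ => ?_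
            rw [Matrix.of_apply, hsc i]
            ring
        _ = a ^ 4 * ∑ i, (v + x₀ • u) i * eval (v + x₀ • u) (pderiv i (pderiv jj F)) := by
            rw [← Finset.mul_sum]
        _ = 0 := by rw [hA jj, mul_zero]
    have hHu : ∀ jj, ∑ i, u i * (Matrix.of fun i j =>
        eval (Projectivization.mk ℂ (v + x₀ • u) hz0).rep (pderiv i (pderiv j F))) i jj = 0 := by
      intro jj
      have hsc : ∀ i, eval (Projectivization.mk ℂ (v + x₀ • u) hz0).rep (pderiv i (pderiv jj F))
          = a ^ 4 * eval (v + x₀ • u) (pderiv i (pderiv jj F)) := by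
        intro i
        rw [harep]
        exact homog_eval_smul (hhom4 i jj) a _
      calc ∑ i, u i * (Matrix.of fun i j =>
            eval (Projectivization.mk ℂ (v + x₀ • u) hz0).rep (pderiv i (pderiv j F))) i jj
          = ∑ i, a ^ 4 * (u i * eval (v + x₀ • u) (pderiv i (pderiv jj F))) := by
            refine Finset.sum_congr rfl fun i _ => ?_
            rw [Matrix.of_apply, hsc i]
            ring
        _ = a ^ 4 * ∑ i, u i * eval (v + x₀ • u) (pderiv i (pderiv jj F)) := by
            rw [← Finset.mul_sum]
        _ = 0 := by rw [hB jj, mul_zero]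
    have hindep_zu : LinearIndependent ℂ ![v + x₀ • u, u] := by
      rw [linearIndependent_fin2]
      refine ⟨by simpa using hu0, ?_⟩
      intro c hc
      simp only [Matrix.cons_val_one, Matrix.head_cons, Matrix.cons_val_zero] at hc
      have hkey : (1 : ℂ) • v + (x₀ - c) • u = 0 := by
        calc (1 : ℂ) • v + (x₀ - c) • u = (v + x₀ • u) - c • u := by
              rw [one_smul, sub_smul]; abel
          _ = c • u - c • u := by rw [← hc]
          _ = 0 := sub_self _
      exact one_ne_zero (hpair _ _ hkey).1
    have hrank := rank_le_two_of_two_rows hindep_zu hHz hHu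
    rw [hnodep] at hrank
    omega
  -- identify the set of singular points on the line
  have hset : {p : ProjP3 | p.rep ∈ W ∧ IsSingularPt F p}
      = (fun x : ℂ => Projectivization.mk ℂ (v + x • u) (hnz x)) ''
          {x : ℂ | (lineP v u (pderiv j₀ F)).eval x = 0} := by
    ext p
    simp only [Set.mem_setOf_eq, Set.mem_image]
    constructor
    · rintro ⟨hpW, hpS⟩
      obtain ⟨s, t, hst⟩ := hWspan p.rep hpW
      have hs : s ≠ 0 := by
        intro hs0
        rw [hs0, zero_smul, zero_add] at hst
        have ht : t ≠ 0 := by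
          intro ht0
          exact p.rep_nonzero (by rw [hst, ht0, zero_smul])
        have h0 := hpS j₀
        rw [hst, homog_eval_smul (hhom5 j₀) t u] at h0
        rcases mul_eq_zero.mp h0 with h | h
        · exact ht (pow_eq_zero_iff (by norm_num)|>.mp h)
        · exact hu h
      have hmul : s * (s⁻¹ * t) = t := by
        field_simp
      have hrepx : p.rep = s • (v + (s⁻¹ * t) • u) := by
        rw [smul_add, smul_smul, hmul, hst]
      refine ⟨s⁻¹ * t, ?_, ?_⟩
      · show (lineP v u (pderiv j₀ F)).eval (s⁻¹ * t) = 0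
        rw [hg₁eval]
        have h0 := hpS j₀
        rw [hrepx, homog_eval_smul (hhom5 j₀) s _] at h0
        rcases mul_eq_zero.mp h0 with h | h
        · exact absurd (pow_eq_zero_iff (by norm_num)|>.mp h) hs
        · exact h
      · rw [← Projectivization.mk_rep p]
        rw [Projectivization.mk_eq_mk_iff']
        refine ⟨s⁻¹, ?_⟩
        rw [hrepx, smul_smul, inv_mul_cancel₀ hs, one_smul]
    · rintro ⟨x, hx, rfl⟩
      have hWm : v + x • u ∈ W := Submodule.add_mem W hvW (Submodule.smul_mem W x huW)
      exact hsing_mk (v + x • u) (hnz x) hWm (by rw [← hg₁eval x]; exact hx)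
  rw [hset, Set.ncard_image_of_injOn (fun x _ y _ h => mk_line_inj hpair hnz h)]
  have hrs : {x : ℂ | (lineP v u (pderiv j₀ F)).eval x = 0}
      = ((lineP v u (pderiv j₀ F)).roots.toFinset : Set ℂ) := by
    ext x
    simp [Multiset.mem_toFinset, Polynomial.mem_roots', hg₁ne, Polynomial.IsRoot]
  rw [hrs, Set.ncard_coe_finset]
  have hnodup : (lineP v u (pderiv j₀ F)).roots.Nodup := by
    rw [Multiset.nodup_iff_count_le_one]
    intro x
    rw [Polynomial.count_roots]
    exact hmult x
  rw [Multiset.toFinset_card_of_nodup hnodup]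
  have hsplits := Polynomial.splits_iff_card_roots.mp
    (IsAlgClosed.splits (lineP v u (pderiv j₀ F)))
  rw [hsplits, hdeg5]
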